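/- Let n ≥ 1, let M and N each be a direct sum of exactly n staircase modules over ℝ², and let ε ≥ 0. Then there exists a morphism f : M → N^ε with 2ε-trivial cokernel if and only if M and N are ε-interleaved. -/

import Mathlib

structure PersMod (F : Type) [Field F] where
  space : ℝ × ℝ → Type
  [isACG : ∀ p, AddCommGroup (space p)]
  [isMod : ∀ p, Module F (space p)]
  map : ∀ {p q : ℝ × ℝ}, p ≤ q → (space p →ₗ[F] space q)
  map_id : ∀ p : ℝ × ℝ, map (le_refl p) = LinearMap.id
  map_comp : ∀ {p q r : ℝ × ℝ} (hpq : p ≤ q) (hqr : q ≤ r),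
      map hqr ∘ₗ map hpq = map (le_trans hpq hqr)

attribute [instance] PersMod.isACG PersMod.isMod

variable {F : Type} [Field F]

/-- `f` is a morphism of persistence modules `M → N`. -/
def IsHom (M N : PersMod F) (f : ∀ p, M.space p →ₗ[F] N.space p) : Prop :=
  ∀ ⦃p q : ℝ × ℝ⦄ (h : p ≤ q), N.map h ∘ₗ f p = f q ∘ₗ M.map h

/-- `f` is a morphism of persistence modules `M → N^ε` (the `ε`-shift of `N`). -/
def IsHomShift (M N : PersMod F) (ε : ℝ)
    (f : ∀ p : ℝ × ℝ, M.space p →ₗ[F] N.space (p + (ε, ε))) : Prop :=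
  ∀ ⦃p q : ℝ × ℝ⦄ (h : p ≤ q),
    N.map (add_le_add h (le_refl ((ε : ℝ), (ε : ℝ)))) ∘ₗ f p = f q ∘ₗ M.map h

/-- `(f, g)` is an `ε`-interleaving between `M` and `N`. -/
def IsInterleaving (M N : PersMod F) (ε : ℝ)
    (f : ∀ p : ℝ × ℝ, M.space p →ₗ[F] N.space (p + (ε, ε)))
    (g : ∀ p : ℝ × ℝ, N.space p →ₗ[F] M.space (p + (ε, ε))) : Prop :=
  IsHomShift M N ε f ∧ IsHomShift N M ε g ∧
  (∀ (p : ℝ × ℝ) (h : p ≤ p + (ε, ε) + (ε, ε)), g (p + (ε, ε)) ∘ₗ f p = M.map h) ∧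
  (∀ (p : ℝ × ℝ) (h : p ≤ p + (ε, ε) + (ε, ε)), f (p + (ε, ε)) ∘ₗ g p = N.map h)

def upset (a : ℝ × ℝ) : Set (ℝ × ℝ) := {x | a ≤ x}

def IsStaircase (S : Set (ℝ × ℝ)) : Prop :=
  ∃ A : Finset (ℝ × ℝ), A.Nonempty ∧ S = ⋃ a ∈ A, upset a

def UpClosed (U : Set (ℝ × ℝ)) : Prop :=
  ∀ ⦃p q : ℝ × ℝ⦄, p ≤ q → p ∈ U → q ∈ U

theorem IsStaircase.upClosed {S : Set (ℝ × ℝ)} (hS : IsStaircase S) : UpClosed S := by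
  obtain ⟨A, -, rfl⟩ := hS
  intro p q hpq hp
  simp only [Set.mem_iUnion] at hp ⊢
  obtain ⟨a, ha, hpa⟩ := hp
  exact ⟨a, ha, le_trans hpa hpq⟩

open Classical in
/-- The fiber of the staircase module over `U` at `p` : `F` if `p ∈ U`, else `0`,
realized as a submodule of `F`. -/
noncomputable def lineAt (F : Type) [Field F] (U : Set (ℝ × ℝ)) (p : ℝ × ℝ) :
    Submodule F F :=
  if p ∈ U then ⊤ else ⊥

/-- The interval (staircase) module `k_U` of an upward closed set `U`. -/
noncomputable def stairMod (F : Type) [Field F] (U : Set (ℝ × ℝ)) (hU : UpClosed U) :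
    PersMod F where
  space p := ↥(lineAt F U p)
  map {p q} h := Submodule.inclusion (by
    by_cases hp : p ∈ U
    · simp [lineAt, hp, hU h hp]
    · simp [lineAt, hp])
  map_id p := rfl
  map_comp _ _ := rfl

/-- The element `1 ∈ F = (k_U)_p` for `p ∈ U`. -/
noncomputable def unitVec (F : Type) [Field F] (U : Set (ℝ × ℝ)) (p : ℝ × ℝ)
    (hp : p ∈ U) : ↥(lineAt F U p) :=
  ⟨1, by simp [lineAt, hp]⟩

/-- The value in `F` of an element of the fiber of `k_U` at `p`. -/
noncomputable def valAt (F : Type) [Field F] (U : Set (ℝ × ℝ)) (p : ℝ × ℝ) :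
    ↥(lineAt F U p) →ₗ[F] F :=
  (lineAt F U p).subtype

/-- Finite direct sums of persistence modules, defined pointwise. -/
noncomputable def dirSum {n : ℕ} (Ms : Fin n → PersMod F) : PersMod F where
  space p := ∀ i, (Ms i).space p
  map h := LinearMap.pi fun i => (Ms i).map h ∘ₗ LinearMap.proj i
  map_id p := by
    refine LinearMap.ext fun x => funext fun i => ?_
    simp [(Ms i).map_id]
  map_comp hpq hqr := by
    refine LinearMap.ext fun x => funext fun i => ?_
    simpa using LinearMap.congr_fun ((Ms i).map_comp hpq hqr) (x i)

/-- Direct sum of staircase modules. -/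
noncomputable def stairSum (F : Type) [Field F] {n : ℕ} (S : Fin n → Set (ℝ × ℝ))
    (hS : ∀ i, UpClosed (S i)) : PersMod F :=
  dirSum fun i => stairMod F (S i) (hS i)

/-- The `ε`-shift `S^ε = {x - (ε,ε) : x ∈ S}` of a set. -/
def shiftSet (S : Set (ℝ × ℝ)) (ε : ℝ) : Set (ℝ × ℝ) := {x | x + (ε, ε) ∈ S}

/-- The directed shift distance `d_s(S,T) = min {ε ≥ 0 : S ⊆ T^ε}`. -/
noncomputable def dirDist (S T : Set (ℝ × ℝ)) : ℝ :=
  sInf {ε : ℝ | 0 ≤ ε ∧ S ⊆ shiftSet T ε}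

/-- `M`, `N` are `ε`-interleaved. -/
def Interleaved (M N : PersMod F) (ε : ℝ) : Prop :=
  ∃ f g, IsInterleaving M N ε f g

/-- The interleaving distance. -/
noncomputable def interDist (M N : PersMod F) : ℝ :=
  sInf {ε : ℝ | 0 ≤ ε ∧ Interleaved M N ε}

/-- `S` has a finite generating set all of whose members are `≤ u`. -/
theorem upClosed_of_gens {S : Set (ℝ × ℝ)} {u : ℝ × ℝ}
    (h : ∃ A : Finset (ℝ × ℝ), A.Nonempty ∧ S = (⋃ a ∈ A, upset a) ∧ ∀ a ∈ A, a ≤ u) :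
    UpClosed S := by
  obtain ⟨A, hne, hSeq, -⟩ := h
  exact IsStaircase.upClosed ⟨A, hne, hSeq⟩

theorem mem_of_gens {S : Set (ℝ × ℝ)} {u v : ℝ × ℝ}
    (h : ∃ A : Finset (ℝ × ℝ), A.Nonempty ∧ S = (⋃ a ∈ A, upset a) ∧ ∀ a ∈ A, a ≤ u)
    (huv : u ≤ v) : v ∈ S := by
  obtain ⟨A, ⟨a, ha⟩, rfl, hle⟩ := h
  exact Set.mem_biUnion ha (le_trans (hle a ha) huv)

/-- `f : M → N^ε` has `δ`-trivial kernel: the induced map `ker f_p → ker f_{p+(δ,δ)}`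
is zero for all `p`. -/
def TrivialKerS (M N : PersMod F) (ε δ : ℝ)
    (f : ∀ p, M.space p →ₗ[F] N.space (p + (ε, ε))) : Prop :=
  ∀ (p : ℝ × ℝ) (x : M.space p), f p x = 0 → ∀ h : p ≤ p + (δ, δ), M.map h x = 0

/-- `f : M → N^ε` has `δ`-trivial cokernel: the induced map
`coker f_p → coker f_{p+(δ,δ)}` is zero for all `p`. -/
def TrivialCokerS (M N : PersMod F) (ε δ : ℝ)
    (f : ∀ p, M.space p →ₗ[F] N.space (p + (ε, ε))) : Prop :=
  ∀ (p : ℝ × ℝ) (y : N.space (p + (ε, ε))) (h : p + (ε, ε) ≤ p + (δ, δ) + (ε, ε)),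
    ∃ x : M.space (p + (δ, δ)), f (p + (δ, δ)) x = N.map h y

/-- `f : M → N` has `δ`-trivial kernel. -/
def TrivialKer (M N : PersMod F) (δ : ℝ) (f : ∀ p, M.space p →ₗ[F] N.space p) : Prop :=
  ∀ (p : ℝ × ℝ) (x : M.space p), f p x = 0 → ∀ h : p ≤ p + (δ, δ), M.map h x = 0

/-- `f : M → N` has `δ`-trivial cokernel. -/
def TrivialCoker (M N : PersMod F) (δ : ℝ) (f : ∀ p, M.space p →ₗ[F] N.space p) : Prop :=
  ∀ (p : ℝ × ℝ) (y : N.space p) (h : p ≤ p + (δ, δ)),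
    ∃ x : M.space (p + (δ, δ)), f (p + (δ, δ)) x = N.map h y

/-- The interior of an upward closed subset of `ℝ²` is upward closed. -/
theorem upClosed_interior {U : Set (ℝ × ℝ)} (hU : UpClosed U) :
    UpClosed (interior U) := by
  intro p q hpq hp
  have hsub : (fun x : ℝ × ℝ => x - (q - p)) ⁻¹' interior U ⊆ U := fun x hx =>
    hU (sub_le_self x (sub_nonneg.mpr hpq)) (interior_subset hx)
  have hopen : IsOpen ((fun x : ℝ × ℝ => x - (q - p)) ⁻¹' interior U) :=
    isOpen_interior.preimage (continuous_id.sub continuous_const)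
  have hq : q ∈ (fun x : ℝ × ℝ => x - (q - p)) ⁻¹' interior U := by
    show q - (q - p) ∈ interior U
    rwa [sub_sub_cancel]
  exact interior_maximal hsub hopen hq

/-- The dual persistence module: `(M*)_p = (M_{-p})^∨`. -/
noncomputable def dualMod (M : PersMod F) : PersMod F where
  space p := Module.Dual F (M.space (-p))
  map {p q} h := (M.map (neg_le_neg h)).dualMap
  map_id p := by
    have h : M.map (neg_le_neg (le_refl p)) = LinearMap.id := M.map_id (-p)
    ext φ x
    simp [h]
  map_comp hpq hqr := by
    ext φ x
    have h := LinearMap.congr_fun (M.map_comp (neg_le_neg hqr) (neg_le_neg hpq)) x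
    simp only [LinearMap.comp_apply, LinearMap.dualMap_apply] at h ⊢
    rw [h]

/-!
A morphism `f : ⨁ᵢ k_{Sᵢ} → (⨁ⱼ k_{Tⱼ})^ε` acts on coordinates by a single matrix `C`, since
any two points of an upward closed set are joined through their supremum. Far enough up every
`Tⱼ` is everything, so a `2ε`-trivial cokernel makes `C` surjective, hence invertible; at the
other points it forces `C⁻¹` to vanish wherever it could not define a morphism
`g : ⨁ⱼ k_{Tⱼ} → (⨁ᵢ k_{Sᵢ})^ε`. Then `(f, g)` is an `ε`-interleaving, the composites being
shifts since `C⁻¹ C = C C⁻¹ = 1`. Conversely, in any `ε`-interleaving `f ∘ g` is the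
`2ε`-shift, so every element is hit by `f` after a `2ε`-shift.
-/

open Matrix

theorem Prod.add_pair_add_pair {α : Type*} [AddSemigroup α] (p : α × α) (a b : α) :
    p + (a, a) + (b, b) = p + (a + b, a + b) := by
  ext <;> simp only [Prod.fst_add, Prod.snd_add, add_assoc]

theorem Prod.le_add_pair (p : ℝ × ℝ) {a : ℝ} (ha : 0 ≤ a) : p ≤ p + (a, a) :=
  le_add_of_nonneg_right ⟨ha, ha⟩

theorem IsInterleaving.trivialCokerS {M N : PersMod F} {ε : ℝ}
    {f : ∀ p : ℝ × ℝ, M.space p →ₗ[F] N.space (p + (ε, ε))}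
    {g : ∀ p : ℝ × ℝ, N.space p →ₗ[F] M.space (p + (ε, ε))}
    (hfg : IsInterleaving M N ε f g) : TrivialCokerS M N ε (2 * ε) f := by
  obtain ⟨hf, -, -, hfg⟩ := hfg
  intro p y h
  have e : p + (ε, ε) + (ε, ε) = p + (2 * ε, 2 * ε) := by
    rw [Prod.add_pair_add_pair, two_mul]
  have hle : p + (ε, ε) ≤ p + (ε, ε) + (ε, ε) + (ε, ε) := by rwa [e]
  refine ⟨M.map e.le (g (p + (ε, ε)) y), ?_⟩
  rw [← LinearMap.comp_apply (f _), ← hf e.le, LinearMap.comp_apply,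
    ← LinearMap.comp_apply (f _), hfg _ hle, ← LinearMap.comp_apply, N.map_comp]

theorem IsStaircase.nonempty {S : Set (ℝ × ℝ)} (hS : IsStaircase S) : S.Nonempty := by
  obtain ⟨A, ⟨a, ha⟩, rfl⟩ := hS
  exact ⟨a, Set.mem_biUnion ha (le_refl a)⟩

theorem IsStaircase.exists_upset_subset {S : Set (ℝ × ℝ)} (hS : IsStaircase S) :
    ∃ u, upset u ⊆ S := by
  obtain ⟨A, ⟨a, ha⟩, rfl⟩ := hS
  exact ⟨a, Set.subset_biUnion_of_mem ha⟩

theorem exists_upset_subset_iInter {m : ℕ} {T : Fin m → Set (ℝ × ℝ)}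
    (hT : ∀ j, IsStaircase (T j)) : ∃ u, ∀ j, upset u ⊆ T j := by
  choose a ha using fun j => (hT j).exists_upset_subset
  obtain ⟨u, hu⟩ := Finite.exists_le a
  exact ⟨u, fun j q hq => ha j (le_trans (hu j) hq)⟩

section StairSum

variable {m n : ℕ} {S : Fin n → Set (ℝ × ℝ)} {T : Fin m → Set (ℝ × ℝ)}
  {hS : ∀ i, UpClosed (S i)} {hT : ∀ j, UpClosed (T j)} {ε : ℝ}

theorem lineAt_eq_zero {U : Set (ℝ × ℝ)} {p : ℝ × ℝ} (hp : p ∉ U) (y : ↥(lineAt F U p)) :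
    y = 0 := by
  have hy := y.2
  simp only [lineAt, if_neg hp, Submodule.mem_bot] at hy
  exact Subtype.ext hy

theorem lineAt_eq_smul_unitVec {U : Set (ℝ × ℝ)} {p : ℝ × ℝ} (hp : p ∈ U)
    (y : ↥(lineAt F U p)) : y = (y : F) • unitVec F U p hp :=
  Subtype.ext (mul_one _).symm

theorem mem_lineAt {U : Set (ℝ × ℝ)} {p : ℝ × ℝ} {v : F} (hv : p ∉ U → v = 0) :
    v ∈ lineAt F U p := by
  by_cases hp : p ∈ U
  · simp [lineAt, hp]
  · simp [lineAt, hp, hv hp]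

variable (S hS) in
noncomputable def stairVals (p : ℝ × ℝ) : (stairSum F S hS).space p →ₗ[F] Fin n → F :=
  LinearMap.pi fun i => valAt F (S i) p ∘ₗ LinearMap.proj i

theorem stairVals_apply {p : ℝ × ℝ} (x : (stairSum F S hS).space p) (i : Fin n) :
    stairVals S hS p x i = valAt F (S i) p (x i) :=
  rfl

theorem stairVals_injective (p : ℝ × ℝ) : Function.Injective (stairVals (F := F) S hS p) :=
  fun _ _ h => funext fun i => (lineAt F (S i) p).injective_subtype (congrFun h i)

theorem stairVals_map {p q : ℝ × ℝ} (h : p ≤ q) (x : (stairSum F S hS).space p) :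
    stairVals S hS q ((stairSum F S hS).map h x) = stairVals S hS p x :=
  rfl

theorem stairVals_eq_zero {p : ℝ × ℝ} (x : (stairSum F S hS).space p) {i : Fin n}
    (hp : p ∉ S i) : stairVals S hS p x i = 0 := by
  rw [stairVals_apply, lineAt_eq_zero hp (x i), map_zero]

theorem exists_stairVals_eq {p : ℝ × ℝ} (hp : ∀ i, p ∈ S i) (v : Fin n → F) :
    ∃ x : (stairSum F S hS).space p, stairVals S hS p x = v :=
  ⟨fun i => ⟨v i, mem_lineAt fun hpi => absurd (hp i) hpi⟩, rfl⟩

variable (S hS) in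
noncomputable def stairSingle (p : ℝ × ℝ) (i : Fin n) (hp : p ∈ S i) :
    (stairSum F S hS).space p :=
  Pi.single (M := fun i => ↥(lineAt F (S i) p)) i (unitVec F (S i) p hp)

theorem stairVals_stairSingle {p : ℝ × ℝ} {i : Fin n} (hp : p ∈ S i) :
    stairVals S hS p (stairSingle S hS p i hp) = Pi.single i (1 : F) := by
  ext i'
  rw [stairVals_apply]
  rcases eq_or_ne i' i with rfl | hne
  · simp [stairSingle, unitVec, valAt]
  · simp [stairSingle, valAt, hne]

theorem stairMap_stairSingle {p q : ℝ × ℝ} (h : p ≤ q) {i : Fin n} (hp : p ∈ S i) :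
    (stairSum F S hS).map h (stairSingle S hS p i hp) = stairSingle S hS q i (hS i h hp) :=
  stairVals_injective q (by rw [stairVals_map, stairVals_stairSingle, stairVals_stairSingle])

open scoped Classical in
theorem stairSum_eq_sum_stairSingle {p : ℝ × ℝ} (x : (stairSum F S hS).space p) :
    x = ∑ i, if h : p ∈ S i then stairVals S hS p x i • stairSingle S hS p i h else 0 := by
  apply stairVals_injective
  ext j
  rw [map_sum, Finset.sum_apply, Finset.sum_eq_single j]
  · by_cases hp : p ∈ S j
    · simp [hp, stairVals_stairSingle]
    · simp [hp, stairVals_eq_zero x hp]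
  · intro i _ hij
    by_cases hp : p ∈ S i
    · simp [hp, stairVals_stairSingle, hij]
    · simp [hp]
  · simp

theorem stairSum_linearMap_ext {V : Type*} [AddCommGroup V] [Module F V] {p : ℝ × ℝ}
    {φ ψ : (stairSum F S hS).space p →ₗ[F] V}
    (h : ∀ i (hp : p ∈ S i), φ (stairSingle S hS p i hp) = ψ (stairSingle S hS p i hp)) :
    φ = ψ := by
  ext x
  rw [stairSum_eq_sum_stairSingle x, map_sum, map_sum]
  refine Finset.sum_congr rfl fun i _ => ?_
  by_cases hp : p ∈ S i
  · rw [dif_pos hp, map_smul, map_smul, h i hp]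
  · rw [dif_neg hp, map_zero, map_zero]

def HasMatrix
    (f : ∀ p : ℝ × ℝ, (stairSum F S hS).space p →ₗ[F] (stairSum F T hT).space (p + (ε, ε)))
    (C : Matrix (Fin m) (Fin n) F) : Prop :=
  ∀ p x, stairVals T hT (p + (ε, ε)) (f p x) = C *ᵥ stairVals S hS p x

variable (hS hT) in
noncomputable def stairMatMap (C : Matrix (Fin m) (Fin n) F)
    (hC : ∀ p i j, p ∈ S i → p + (ε, ε) ∉ T j → C j i = 0) (p : ℝ × ℝ) :
    (stairSum F S hS).space p →ₗ[F] (stairSum F T hT).space (p + (ε, ε)) :=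
  LinearMap.pi fun j => LinearMap.codRestrict (lineAt F (T j) (p + (ε, ε)))
    (LinearMap.proj j ∘ₗ C.mulVecLin ∘ₗ stairVals S hS p) fun x => mem_lineAt fun hpj =>
      show ∑ i, C j i * stairVals S hS p x i = 0 from Finset.sum_eq_zero fun i _ => by
        by_cases hpi : p ∈ S i
        · rw [hC p i j hpi hpj, zero_mul]
        · rw [stairVals_eq_zero x hpi, mul_zero]

theorem hasMatrix_stairMatMap {C : Matrix (Fin m) (Fin n) F}
    (hC : ∀ p i j, p ∈ S i → p + (ε, ε) ∉ T j → C j i = 0) :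
    HasMatrix (stairMatMap hS hT C hC) C :=
  fun _ _ => rfl

variable {f : ∀ p : ℝ × ℝ, (stairSum F S hS).space p →ₗ[F] (stairSum F T hT).space (p + (ε, ε))}
  {C : Matrix (Fin m) (Fin n) F}

theorem HasMatrix.isHomShift (hC : HasMatrix f C) :
    IsHomShift (stairSum F S hS) (stairSum F T hT) ε f := by
  intro p q h
  ext x
  apply stairVals_injective
  rw [LinearMap.comp_apply, LinearMap.comp_apply, stairVals_map, hC, hC, stairVals_map]

theorem HasMatrix.comp_eq_map
    {g : ∀ p : ℝ × ℝ, (stairSum F T hT).space p →ₗ[F] (stairSum F S hS).space (p + (ε, ε))}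
    {D : Matrix (Fin n) (Fin m) F} (hC : HasMatrix f C) (hD : HasMatrix g D) (hDC : D * C = 1)
    (p : ℝ × ℝ) (h : p ≤ p + (ε, ε) + (ε, ε)) :
    g (p + (ε, ε)) ∘ₗ f p = (stairSum F S hS).map h := by
  ext x
  apply stairVals_injective
  rw [LinearMap.comp_apply, hD, hC, stairVals_map, mulVec_mulVec, hDC, one_mulVec]

theorem IsHomShift.stairVals_apply_stairSingle_eq
    (hf : IsHomShift (stairSum F S hS) (stairSum F T hT) ε f) {p q : ℝ × ℝ} {i : Fin n}
    (hp : p ∈ S i) (hq : q ∈ S i) :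
    stairVals T hT _ (f p (stairSingle S hS p i hp)) =
      stairVals T hT _ (f q (stairSingle S hS q i hq)) := by
  have h_up : ∀ {r s : ℝ × ℝ} (hr : r ∈ S i) (h : r ≤ s),
      stairVals T hT _ (f s (stairSingle S hS s i (hS i h hr))) =
        stairVals T hT _ (f r (stairSingle S hS r i hr)) := fun hr h => by
    rw [← stairMap_stairSingle h, ← LinearMap.comp_apply (f _), ← hf h, LinearMap.comp_apply,
      stairVals_map]
  rw [← h_up hp (le_sup_left : p ≤ p ⊔ q), ← h_up hq le_sup_right]

theorem IsHomShift.exists_hasMatrix (hf : IsHomShift (stairSum F S hS) (stairSum F T hT) ε f)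
    (hSne : ∀ i, (S i).Nonempty) : ∃ C, HasMatrix f C := by
  choose a ha using hSne
  let C : Matrix (Fin m) (Fin n) F :=
    Matrix.of fun j i => stairVals T hT _ (f (a i) (stairSingle S hS (a i) i (ha i))) j
  refine ⟨C, fun p x => LinearMap.congr_fun
    (?_ : stairVals T hT _ ∘ₗ f p = C.mulVecLin ∘ₗ stairVals S hS p) x⟩
  refine stairSum_linearMap_ext fun i hp => ?_
  rw [LinearMap.comp_apply, LinearMap.comp_apply, mulVecLin_apply,
    stairVals_stairSingle hp, mulVec_single, MulOpposite.op_one, one_smul]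
  ext j
  rw [hf.stairVals_apply_stairSingle_eq hp (ha i)]
  rfl

theorem TrivialCokerS.exists_mulVec_eq
    (hcok : TrivialCokerS (stairSum F S hS) (stairSum F T hT) ε (2 * ε) f) (hC : HasMatrix f C)
    (hε : 0 ≤ ε) (p : ℝ × ℝ) (y : (stairSum F T hT).space (p + (ε, ε))) :
    ∃ x : (stairSum F S hS).space (p + (2 * ε, 2 * ε)),
      C *ᵥ stairVals S hS _ x = stairVals T hT _ y := by
  have h : p + (ε, ε) ≤ p + (2 * ε, 2 * ε) + (ε, ε) :=
    add_le_add_left (p.le_add_pair (by positivity)) _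
  obtain ⟨x, hx⟩ := hcok p y h
  exact ⟨x, by rw [← hC, hx, stairVals_map]⟩

theorem TrivialCokerS.exists_mul_eq_one
    (hcok : TrivialCokerS (stairSum F S hS) (stairSum F T hT) ε (2 * ε) f) (hC : HasMatrix f C)
    (hε : 0 ≤ ε) {u : ℝ × ℝ} (hu : ∀ j, upset u ⊆ T j) :
    ∃ D : Matrix (Fin n) (Fin m) F, C * D = 1 := by
  refine mulVec_surjective_iff_exists_right_inverse.mp fun v => ?_
  obtain ⟨y, rfl⟩ := exists_stairVals_eq (hS := hT) (fun j => hu j (u.le_add_pair hε)) v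
  obtain ⟨x, hx⟩ := hcok.exists_mulVec_eq hC hε u y
  exact ⟨_, hx⟩

/-- The `j`-th column of `D` is the coordinate vector of a preimage, at `p + (ε, ε)`, of the
generator of `k_{Tⱼ}` at `p`. -/
theorem TrivialCokerS.left_inverse_support
    (hcok : TrivialCokerS (stairSum F S hS) (stairSum F T hT) ε (2 * ε) f) (hC : HasMatrix f C)
    (hε : 0 ≤ ε) {D : Matrix (Fin n) (Fin m) F} (hDC : D * C = 1) :
    ∀ p j i, p ∈ T j → p + (ε, ε) ∉ S i → D i j = 0 := by
  intro p j i hpj hpi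
  have e₁ : p - (ε, ε) + (ε, ε) = p := sub_add_cancel p _
  have e₂ : p - (ε, ε) + (2 * ε, 2 * ε) = p + (ε, ε) := by
    rw [two_mul, ← Prod.add_pair_add_pair, e₁]
  have hpj' : p - (ε, ε) + (ε, ε) ∈ T j := by rwa [e₁]
  obtain ⟨x, hx⟩ := hcok.exists_mulVec_eq hC hε _ (stairSingle T hT _ j hpj')
  have hcol : D *ᵥ Pi.single j 1 = stairVals S hS _ x := by
    rw [← stairVals_stairSingle (hS := hT) hpj', ← hx, mulVec_mulVec, hDC, one_mulVec]
  have hDij := congrFun hcol i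
  rw [mulVec_single, MulOpposite.op_one, one_smul] at hDij
  exact hDij.trans (stairVals_eq_zero x (e₂ ▸ hpi))

end StairSum

theorem interleaved_of_trivialCokerS {n : ℕ} {S T : Fin n → Set (ℝ × ℝ)}
    {hS : ∀ i, UpClosed (S i)} {hT : ∀ j, UpClosed (T j)} {ε : ℝ}
    {f : ∀ p : ℝ × ℝ, (stairSum F S hS).space p →ₗ[F] (stairSum F T hT).space (p + (ε, ε))}
    (hSne : ∀ i, (S i).Nonempty) {u : ℝ × ℝ} (hu : ∀ j, upset u ⊆ T j) (hε : 0 ≤ ε)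
    (hf : IsHomShift (stairSum F S hS) (stairSum F T hT) ε f)
    (hcok : TrivialCokerS (stairSum F S hS) (stairSum F T hT) ε (2 * ε) f) :
    Interleaved (stairSum F S hS) (stairSum F T hT) ε := by
  obtain ⟨C, hC⟩ := hf.exists_hasMatrix hSne
  obtain ⟨D, hCD⟩ := hcok.exists_mul_eq_one hC hε hu
  have hDC : D * C = 1 := mul_eq_one_comm.mp hCD
  have hD := hasMatrix_stairMatMap (hS := hT) (hT := hS)
    (hcok.left_inverse_support hC hε hDC)
  exact ⟨f, _, hf, hD.isHomShift, hC.comp_eq_map hD hDC, hD.comp_eq_map hC hCD⟩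

theorem stmt_16_general (F : Type) [Field F] (n : ℕ)
    (S T : Fin n → Set (ℝ × ℝ))
    (hS : ∀ i, IsStaircase (S i)) (hT : ∀ j, IsStaircase (T j))
    (ε : ℝ) (hε : 0 ≤ ε) :
    (∃ f, IsHomShift (stairSum F S fun i => (hS i).upClosed)
            (stairSum F T fun j => (hT j).upClosed) ε f ∧
          TrivialCokerS (stairSum F S fun i => (hS i).upClosed)
            (stairSum F T fun j => (hT j).upClosed) ε (2*ε) f) ↔
    Interleaved (stairSum F S fun i => (hS i).upClosed)
      (stairSum F T fun j => (hT j).upClosed) ε := by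
  constructor
  · rintro ⟨f, hf, hcok⟩
    obtain ⟨u, hu⟩ := exists_upset_subset_iInter hT
    exact interleaved_of_trivialCokerS (fun i => (hS i).nonempty) hu hε hf hcok
  · rintro ⟨f, g, hfg⟩
    exact ⟨f, hfg.1, hfg.trivialCokerS⟩

/-- **One-sided characterization of interleavings for sums of `n` staircase modules.**
There exists a morphism `f : M → N^ε` with `2ε`-trivial cokernel iff `M` and `N` are
`ε`-interleaved. -/
theorem stmt_16 (F : Type) [Field F] [Fintype F] (n : ℕ) (hn : 1 ≤ n)
    (S T : Fin n → Set (ℝ × ℝ))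
    (hS : ∀ i, IsStaircase (S i)) (hT : ∀ j, IsStaircase (T j))
    (ε : ℝ) (hε : 0 ≤ ε) :
    (∃ f, IsHomShift (stairSum F S fun i => (hS i).upClosed)
            (stairSum F T fun j => (hT j).upClosed) ε f ∧
          TrivialCokerS (stairSum F S fun i => (hS i).upClosed)
            (stairSum F T fun j => (hT j).upClosed) ε (2*ε) f) ↔
    Interleaved (stairSum F S fun i => (hS i).upClosed)
      (stairSum F T fun j => (hT j).upClosed) ε :=
  stmt_16_general F n S T hS hT ε hε
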